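/- arXiv:2010.06129 — 5 statements merged into one kernel-verified Lean document; each statement's English description precedes it below -/
import Mathlib

section
/- Let r be a positive integer, V an r-dimensional complex vector space with basis e = (e_0,…,e_{r−1}), and α a nonzero complex number. Let f be the linear automorphism of V determined by f(e_i)=e_{i+1} for 0≤i≤r−2 and f(e_{r−1})=α^r e_0, and let the group G_r={a∈ℂ : a^r=1} act on V by a•e_i = a^i e_i. Then every complex subspace V'⊆V which is G_r-invariant and satisfies f(V')⊆V' is equal to 0 or to V. -/
/-!
Fix a primitive `r`-th root of unity `ζ`. It acts diagonally in the basis `e` with the distinct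
eigenvalues `ζ ^ i`, so Lagrange interpolation in this operator yields the coordinate projections,
and these preserve `V'`: a nonzero `V'` contains some `e i`. Since `f` permutes the lines `ℂ ∙ e i`
cyclically, `V'` then contains every `e j`.
-/

open Polynomial Module

section DiagonalOperator

variable {K M ι : Type*} [Field K] [AddCommGroup M] [Module K M] (b : Basis ι K M) (c : ι → K)

theorem Module.Basis.aeval_constr_smul_apply (P : K[X]) (i : ι) :
    aeval (b.constr K fun i => c i • b i) P (b i) = P.eval (c i) • b i :=
  End.aeval_apply_of_hasEigenvector
    ⟨End.mem_eigenspace_iff.mpr (by simp), b.ne_zero i⟩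

variable [Fintype ι] {c}

theorem Module.Basis.repr_smul_mem_of_map_constr_le [DecidableEq ι] (hc : Function.Injective c)
    {p : Submodule K M} (hp : p.map (b.constr K fun i => c i • b i) ≤ p) {v : M} (hv : v ∈ p)
    (i : ι) : b.repr v i • b i ∈ p := by
  have hproj : aeval (b.constr K fun i => c i • b i) (Lagrange.basis Finset.univ c i) v =
      b.repr v i • b i := by
    nth_rw 1 [← b.sum_repr v]
    simp only [map_sum, map_smul, b.aeval_constr_smul_apply, smul_smul]
    rw [Finset.sum_eq_single i (fun j _ hji => by simp [Lagrange.eval_basis_of_ne hji.symm])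
      (by simp)]
    simp [hc.injOn]
  rw [← hproj]
  exact aeval_apply_smul_mem_of_le_comap hv _ _ (Submodule.map_le_iff_le_comap.mp hp)

theorem Module.Basis.exists_mem_of_map_constr_le (hc : Function.Injective c)
    {p : Submodule K M} (hp : p.map (b.constr K fun i => c i • b i) ≤ p) (hp₀ : p ≠ ⊥) :
    ∃ i, b i ∈ p := by
  classical
  obtain ⟨v, hv, hv₀⟩ := p.ne_bot_iff.mp hp₀
  obtain ⟨i, hi⟩ : ∃ i, b.repr v i ≠ 0 := by
    by_contra! h
    exact hv₀ (b.ext_elem_iff.mpr (by simpa using h))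
  exact ⟨i, (p.smul_mem_iff hi).mp (b.repr_smul_mem_of_map_constr_le hc hp hv i)⟩

end DiagonalOperator

theorem Submodule.apply_perm_pow_mem_of_map_le {R M ι : Type*} [Semiring R] [AddCommMonoid M]
    [Module R M] {p : Submodule R M} {f : M →ₗ[R] M} (hp : p.map f ≤ p) {v : ι → M}
    {σ : Equiv.Perm ι} (hσ : ∀ i, ∃ a : R, v (σ i) = a • f (v i)) {i : ι} (hi : v i ∈ p)
    (n : ℕ) : v ((σ ^ n) i) ∈ p := by
  induction n with
  | zero => exact hi
  | succ n ih =>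
    obtain ⟨a, ha⟩ := hσ ((σ ^ n) i)
    rw [pow_succ', Equiv.Perm.mul_apply, ha]
    exact p.smul_mem a (hp ⟨_, ih, rfl⟩)

theorem exists_finRotate_pow_apply_eq {n : ℕ} (i j : Fin n) : ∃ k : ℕ, (finRotate n ^ k) i = j := by
  rcases lt_or_ge n 2 with hn | hn
  · have : Subsingleton (Fin n) := Fin.subsingleton_iff_le_one.mpr (by omega)
    exact ⟨0, Subsingleton.elim _ _⟩
  · have hfix (x : Fin n) : finRotate n x ≠ x := by
      rw [← Equiv.Perm.mem_support, support_finRotate_of_le hn]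
      exact Finset.mem_univ x
    exact (isCycle_finRotate_of_le hn).exists_pow_eq (hfix i) (hfix j)

theorem exists_finRotate_eq_smul_apply {K V : Type*} [DivisionRing K] [AddCommMonoid V]
    [Module K V] {r : ℕ} (hr : 0 < r) (e : Fin r → V) {β : K} (hβ : β ≠ 0)
    {f : V →ₗ[K] V} (hf : ∀ (i : Fin r) (h : (i : ℕ) + 1 < r), f (e i) = e ⟨(i : ℕ) + 1, h⟩)
    (hlast : f (e ⟨r - 1, Nat.sub_lt hr Nat.one_pos⟩) = β • e ⟨0, hr⟩) (i : Fin r) :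
    ∃ a : K, e (finRotate r i) = a • f (e i) := by
  obtain ⟨n, rfl⟩ : ∃ n, r = n + 1 := ⟨r - 1, by omega⟩
  obtain ⟨i, hi⟩ := i
  rcases Nat.lt_succ_iff_lt_or_eq.mp hi with hin | rfl
  · exact ⟨1, by rw [finRotate_of_lt hin, one_smul, hf]⟩
  · refine ⟨β⁻¹, ?_⟩
    rw [finRotate_last', show (⟨i, hi⟩ : Fin (i + 1)) = ⟨i + 1 - 1, _⟩ from rfl, hlast,
      inv_smul_smul₀ hβ]

/-- a `G_r`-invariant subspace preserved by the cyclic automorphism `f`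
is trivial. -/
theorem cyclic_invariant_subspace_trivial
    (r : ℕ) (hr : 0 < r) (V : Type*) [AddCommGroup V] [Module ℂ V]
    (e : Module.Basis (Fin r) ℂ V) (α : ℂ) (hα : α ≠ 0)
    (f : V →ₗ[ℂ] V)
    (hf : ∀ (i : Fin r) (h : (i : ℕ) + 1 < r), f (e i) = e ⟨(i : ℕ) + 1, h⟩)
    (hlast : f (e ⟨r - 1, Nat.sub_lt hr Nat.one_pos⟩) = α ^ r • e ⟨0, hr⟩)
    (V' : Submodule ℂ V)
    (hfV' : V'.map f ≤ V')
    (hGV' : ∀ a : ℂ, a ^ r = 1 →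
      V'.map (e.constr ℂ fun i : Fin r => a ^ (i : ℕ) • e i) ≤ V') :
    V' = ⊥ ∨ V' = ⊤ := by
  have hζ := Complex.isPrimitiveRoot_exp r hr.ne'
  refine or_iff_not_imp_left.mpr fun hV' => ?_
  obtain ⟨i, hi⟩ := e.exists_mem_of_map_constr_le
    (fun j k hjk => Fin.ext (hζ.pow_inj j.2 k.2 hjk)) (hGV' _ hζ.pow_eq_one) hV'
  have hall (j : Fin r) : e j ∈ V' := by
    obtain ⟨k, rfl⟩ := exists_finRotate_pow_apply_eq i j
    exact V'.apply_perm_pow_mem_of_map_le hfV'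
      (exists_finRotate_eq_smul_apply hr e (pow_ne_zero r hα) hf hlast) hi k
  exact eq_top_iff.mpr (e.span_eq ▸ Submodule.span_le.mpr (Set.range_subset_iff.mpr hall))
end

section
/- Let C be a positive number with C ≥ √r·|α|. For any h∈ℋ(f,e) such that the operator norm |f|_h ≤ C, one has |e_i|_h ≤ |α|^{−r}·C^{(r+1)/2+i} for i=0,…,r−2, and |e_{r−1}|_h ≤ C^{(r−1)/2}. -/
structure HermMetric (r : ℕ) {V : Type*} [AddCommGroup V] [Module ℂ V]
    (e : Module.Basis (Fin r) ℂ V) (h : V → V → ℂ) : Prop where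
  add_left : ∀ x y z : V, h (x + y) z = h x z + h y z
  smul_left : ∀ (c : ℂ) (x y : V), h (c • x) y = (starRingEnd ℂ) c * h x y
  conj_symm : ∀ x y : V, h y x = (starRingEnd ℂ) (h x y)
  pos_def : ∀ x : V, x ≠ 0 → 0 < (h x x).re
  orthogonal : ∀ i j : Fin r, i ≠ j → h (e i) (e j) = 0
  prod_one : ∏ i : Fin r, h (e i) (e i) = 1

/-!
Write `ν i = |e_i|_h`. The operator-norm bound gives `ν (i+1) ≤ C ν i` and, from
`f e_{r-1} = α^r e_0`, also `|α|^r ν 0 ≤ C ν (r-1)`. Hence `ν (r-1) ≤ C^(r-1-i) ν i` for every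
`i`, and multiplying these `r` inequalities, with `∏ ν i = 1`, gives
`ν (r-1)^r ≤ C^(r(r-1)/2)`, that is `ν (r-1) ≤ C^((r-1)/2)`. Going once around the cycle,
`ν i ≤ C^i ν 0 ≤ C^(i+1) ν (r-1) / |α|^r` then bounds the other basis vectors.
-/

open Finset

namespace HermMetric

variable {r : ℕ} {V : Type*} [AddCommGroup V] [Module ℂ V] {e : Module.Basis (Fin r) ℂ V}
  {h : V → V → ℂ}

theorem ofReal_re_self (hM : HermMetric r e h) (x : V) : ((h x x).re : ℂ) = h x x :=
  Complex.conj_eq_iff_re.mp (hM.conj_symm x x).symm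

theorem smul_right (hM : HermMetric r e h) (c : ℂ) (x y : V) : h x (c • y) = c * h x y := by
  rw [hM.conj_symm (c • y) x, hM.smul_left, map_mul, Complex.conj_conj,
    hM.conj_symm x y, Complex.conj_conj]

theorem re_smul_self (hM : HermMetric r e h) (c : ℂ) (x : V) :
    (h (c • x) (c • x)).re = ‖c‖ ^ 2 * (h x x).re := by
  rw [hM.smul_left, hM.smul_right, ← mul_assoc, Complex.conj_mul', ← hM.ofReal_re_self x]
  norm_cast

theorem sqrt_re_smul_self (hM : HermMetric r e h) (c : ℂ) (x : V) :
    √(h (c • x) (c • x)).re = ‖c‖ * √(h x x).re := by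
  rw [hM.re_smul_self, Real.sqrt_mul (by positivity), Real.sqrt_sq (norm_nonneg c)]

theorem prod_sqrt_re_basis (hM : HermMetric r e h) : ∏ i, √(h (e i) (e i)).re = 1 := by
  have hprod : ∏ i, (h (e i) (e i)).re = 1 := by
    apply Complex.ofReal_injective
    push_cast [hM.ofReal_re_self]
    exact hM.prod_one
  rw [← Real.sqrt_prod _ fun i _ => (hM.pos_def _ (e.ne_zero i)).le, hprod, Real.sqrt_one]

end HermMetric

section CyclicGrowth

variable {ν : ℕ → ℝ} {r : ℕ} {C : ℝ}

theorem le_pow_mul_of_succ_le_mul (hC : 0 ≤ C) (hstep : ∀ n, n + 1 < r → ν (n + 1) ≤ C * ν n)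
    {m n : ℕ} (hmn : m ≤ n) (hn : n < r) : ν n ≤ C ^ (n - m) * ν m := by
  induction n, hmn using Nat.le_induction with
  | base => simp
  | succ n hmn ih =>
    calc ν (n + 1) ≤ C * ν n := hstep n hn
      _ ≤ C * (C ^ (n - m) * ν m) := mul_le_mul_of_nonneg_left (ih (by omega)) hC
      _ = C ^ (n + 1 - m) * ν m := by rw [← mul_assoc, ← pow_succ', Nat.sub_add_comm hmn]

theorem pow_le_pow_sum_range_id_of_prod_eq_one (hC : 0 ≤ C) (hν : ∀ n < r, 0 ≤ ν n)
    (hprod : ∏ n ∈ range r, ν n = 1) (hstep : ∀ n, n + 1 < r → ν (n + 1) ≤ C * ν n) :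
    ν (r - 1) ^ r ≤ C ^ (∑ n ∈ range r, n) :=
  calc ν (r - 1) ^ r = ∏ _n ∈ range r, ν (r - 1) := by rw [prod_const, card_range]
    _ ≤ ∏ n ∈ range r, (C ^ (r - 1 - n) * ν n) := by
      refine prod_le_prod (fun n hn => hν _ (by grind)) fun n hn => ?_
      exact le_pow_mul_of_succ_le_mul hC hstep (by grind) (by grind)
    _ = C ^ (∑ n ∈ range r, n) := by
      rw [prod_mul_distrib, hprod, mul_one, prod_pow_eq_pow_sum,
        ← sum_range_reflect (fun n => n)]

theorem le_rpow_of_prod_eq_one (hr : 0 < r) (hC : 0 ≤ C) (hν : ∀ n < r, 0 ≤ ν n)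
    (hprod : ∏ n ∈ range r, ν n = 1) (hstep : ∀ n, n + 1 < r → ν (n + 1) ≤ C * ν n) :
    ν (r - 1) ≤ C ^ (((r : ℝ) - 1) / 2) := by
  have hsum : ((∑ n ∈ range r, n : ℕ) : ℝ) = ((r : ℝ) - 1) / 2 * r := by
    have := congrArg (Nat.cast (R := ℝ)) (sum_range_id_mul_two r)
    push_cast [Nat.cast_sub hr] at this ⊢
    linarith
  refine (pow_le_pow_iff_left₀ (hν _ (by omega)) (by positivity) hr.ne').mp ?_
  rw [← Real.rpow_mul_natCast hC, ← hsum, Real.rpow_natCast]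
  exact pow_le_pow_sum_range_id_of_prod_eq_one hC hν hprod hstep

theorem le_rpow_of_cyclic_growth (hr : 0 < r) (hC : 0 < C) {A : ℝ} (hA : 0 < A)
    (hν : ∀ n < r, 0 ≤ ν n) (hprod : ∏ n ∈ range r, ν n = 1)
    (hstep : ∀ n, n + 1 < r → ν (n + 1) ≤ C * ν n) (hwrap : A ^ r * ν 0 ≤ C * ν (r - 1))
    {i : ℕ} (hi : i < r) : ν i ≤ A ^ (-(r : ℝ)) * C ^ (((r : ℝ) + 1) / 2 + i) := by
  have hlast := le_rpow_of_prod_eq_one hr hC.le hν hprod hstep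
  have hA' : A ^ (-(r : ℝ)) = (A ^ r)⁻¹ := by rw [Real.rpow_neg hA.le, Real.rpow_natCast]
  have hfirst : ν 0 ≤ A ^ (-(r : ℝ)) * (C * ν (r - 1)) := by
    rw [hA', le_inv_mul_iff₀ (by positivity)]
    exact hwrap
  calc ν i ≤ C ^ i * ν 0 := by
        simpa using le_pow_mul_of_succ_le_mul hC.le hstep (Nat.zero_le i) hi
    _ ≤ C ^ i * (A ^ (-(r : ℝ)) * (C * C ^ (((r : ℝ) - 1) / 2))) := by
        gcongr
        exact hfirst.trans (by gcongr)
    _ = A ^ (-(r : ℝ)) * C ^ (((r : ℝ) + 1) / 2 + i) := by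
      rw [show ((r : ℝ) + 1) / 2 + i = 1 + ((r : ℝ) - 1) / 2 + i by ring,
        Real.rpow_add hC, Real.rpow_add hC, Real.rpow_one, Real.rpow_natCast]
      ring

end CyclicGrowth

theorem basis_norm_upper_bounds_general
    (r : ℕ) (hr : 0 < r) (V : Type*) [AddCommGroup V] [Module ℂ V]
    (e : Module.Basis (Fin r) ℂ V) (α : ℂ) (hα : α ≠ 0)
    (f : V →ₗ[ℂ] V)
    (hf : ∀ (i : Fin r) (h : (i : ℕ) + 1 < r), f (e i) = e ⟨(i : ℕ) + 1, h⟩)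
    (hlast : f (e ⟨r - 1, Nat.sub_lt hr Nat.one_pos⟩) = α ^ r • e ⟨0, hr⟩)
    (C : ℝ) (hCpos : 0 < C)
    (h : V → V → ℂ) (hMet : HermMetric r e h)
    (hfC : ∀ x : V, (h (f x) (f x)).re ≤ C ^ 2 * (h x x).re) :
    (∀ i : Fin r, (i : ℕ) + 1 < r →
      Real.sqrt (h (e i) (e i)).re ≤
        ‖α‖ ^ (-(r : ℝ)) * C ^ (((r : ℝ) + 1) / 2 + ((i : ℕ) : ℝ))) ∧
    Real.sqrt (h (e ⟨r - 1, Nat.sub_lt hr Nat.one_pos⟩)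
        (e ⟨r - 1, Nat.sub_lt hr Nat.one_pos⟩)).re ≤ C ^ (((r : ℝ) - 1) / 2) := by
  set ν : ℕ → ℝ := fun n => if hn : n < r then √(h (e ⟨n, hn⟩) (e ⟨n, hn⟩)).re else 0
  have hν_fin (i : Fin r) : ν i = √(h (e i) (e i)).re := dif_pos i.isLt
  have hnorm_f (x : V) : √(h (f x) (f x)).re ≤ C * √(h x x).re := by
    rw [← Real.sqrt_sq hCpos.le, ← Real.sqrt_mul (sq_nonneg C)]
    exact Real.sqrt_le_sqrt (hfC x)
  have hprod : ∏ n ∈ range r, ν n = 1 := by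
    rw [← Fin.prod_univ_eq_prod_range]
    simpa only [hν_fin] using hMet.prod_sqrt_re_basis
  have hstep (n : ℕ) (hn : n + 1 < r) : ν (n + 1) ≤ C * ν n := by
    rw [hν_fin ⟨n + 1, hn⟩, hν_fin ⟨n, by omega⟩, ← hf ⟨n, by omega⟩ hn]
    exact hnorm_f _
  have hwrap : ‖α‖ ^ r * ν 0 ≤ C * ν (r - 1) := by
    rw [hν_fin ⟨0, hr⟩, hν_fin ⟨r - 1, by omega⟩, ← norm_pow, ← hMet.sqrt_re_smul_self, ← hlast]
    exact hnorm_f _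
  have hν : ∀ n < r, 0 ≤ ν n := fun n hn => hν_fin ⟨n, hn⟩ ▸ Real.sqrt_nonneg _
  refine ⟨fun i hi => ?_, ?_⟩
  · rw [← hν_fin]
    exact le_rpow_of_cyclic_growth hr hCpos (norm_pos_iff.mpr hα) hν hprod hstep hwrap i.isLt
  · rw [← hν_fin]
    exact le_rpow_of_prod_eq_one hr hCpos.le hν hprod hstep

/-- upper bounds for the norms of the basis vectors when the operator
norm of `f` is bounded by `C`. -/
theorem basis_norm_upper_bounds
    (r : ℕ) (hr : 0 < r) (V : Type*) [AddCommGroup V] [Module ℂ V]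
    (e : Module.Basis (Fin r) ℂ V) (α : ℂ) (hα : α ≠ 0)
    (f : V →ₗ[ℂ] V)
    (hf : ∀ (i : Fin r) (h : (i : ℕ) + 1 < r), f (e i) = e ⟨(i : ℕ) + 1, h⟩)
    (hlast : f (e ⟨r - 1, Nat.sub_lt hr Nat.one_pos⟩) = α ^ r • e ⟨0, hr⟩)
    (C : ℝ) (hCpos : 0 < C) (hC : Real.sqrt r * ‖α‖ ≤ C)
    (h : V → V → ℂ) (hMet : HermMetric r e h)
    (hfC : ∀ x : V, (h (f x) (f x)).re ≤ C ^ 2 * (h x x).re) :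
    (∀ i : Fin r, (i : ℕ) + 1 < r →
      Real.sqrt (h (e i) (e i)).re ≤
        ‖α‖ ^ (-(r : ℝ)) * C ^ (((r : ℝ) + 1) / 2 + ((i : ℕ) : ℝ))) ∧
    Real.sqrt (h (e ⟨r - 1, Nat.sub_lt hr Nat.one_pos⟩)
        (e ⟨r - 1, Nat.sub_lt hr Nat.one_pos⟩)).re ≤ C ^ (((r : ℝ) - 1) / 2) :=
  basis_norm_upper_bounds_general r hr V e α hα f hf hlast C hCpos h hMet hfC
end

section
/- Let a>1/2. Let f be a continuous real-valued function on the closure D̄_a(0) which is subharmonic in D_a(0). Assume there exist C>0, 0<ρ<a, M∈ℝ, and an exhaustive family {K_i} of D_a(0) such that f ≤ C(|z|^ρ+1) on ∂K_i for every i, and f ≤ M on ∂D_a(0). Then f ≤ M on D_a(0). -/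
/-!
Choose `ρ < b < a`. The function `Re (z ^ b)` is harmonic on the sector and, since
`|b arg z| ≤ bπ/(2a) < π/2`, bounded below there by `c |z| ^ b` with `c = cos (bπ/(2a)) > 0`.
Hence `f - ε Re (z ^ b)` is subharmonic, and by the maximum principle on each `K_i` the growth
bound `C (|z| ^ ρ + 1)` with `ρ < b` makes it bounded above on the sector. Applying this bound
with `ε / 2`, the function `f - ε Re (z ^ b)` tends to `-∞` at infinity, so the maximum principle
on the truncated sectors `{z ∈ D_a(0) : |z| < R}` gives `f - ε Re (z ^ b) ≤ M`; let `ε → 0`.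
-/

/-- The sector `D_a(R) = {z : |z| > R, |arg z| < π/(2a)}`. -/
def Da (a R : ℝ) : Set ℂ :=
  {z : ℂ | R < ‖z‖ ∧ |Complex.arg z| < Real.pi / (2 * a)}

/-- A continuous function is subharmonic on an open set if it satisfies the
sub-mean-value inequality on every closed disc contained in the set. -/
def IsSubharmonicOn (u : ℂ → ℝ) (Ω : Set ℂ) : Prop :=
  ContinuousOn u Ω ∧
  ∀ (z : ℂ) (ρ : ℝ), 0 < ρ → Metric.closedBall z ρ ⊆ Ω →
    u z ≤ (2 * Real.pi)⁻¹ *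
      ∫ θ in (0 : ℝ)..(2 * Real.pi), u (z + ρ * Complex.exp (θ * Complex.I))

/-- An exhaustive family of an open set: an increasing sequence of relatively compact
open subsets whose union is the whole set. -/
structure ExhaustiveFamily (K : ℕ → Set ℂ) (U : Set ℂ) : Prop where
  isOpen : ∀ i, IsOpen (K i)
  compact_closure : ∀ i, IsCompact (closure (K i))
  closure_subset : ∀ i, closure (K i) ⊆ U
  mono : ∀ i, K i ⊆ K (i + 1)
  union_eq : (⋃ i, K i) = U

open Complex Metric Set Filter Topology
open Real

theorem Real.circleAverage_lt_of_le_of_exists_lt {f : ℂ → ℝ} {c : ℂ} {R a : ℝ}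
    (hf : ContinuousOn f (sphere c |R|)) (hle : ∀ x ∈ sphere c |R|, f x ≤ a)
    (hlt : ∃ x ∈ sphere c |R|, f x < a) : circleAverage f c R < a := by
  obtain ⟨x, hx, hxa⟩ := hlt
  rw [← image_circleMap_Ioc] at hx
  obtain ⟨θ, hθ, rfl⟩ := hx
  rw [← circleAverage_const a c R, circleAverage_def, circleAverage_def, smul_eq_mul, smul_eq_mul]
  refine mul_lt_mul_of_pos_left ?_ (by positivity)
  exact intervalIntegral.integral_lt_integral_of_continuousOn_of_le_of_exists_lt two_pi_pos
    (hf.comp (continuous_circleMap c R).continuousOn fun θ _ ↦ circleMap_mem_sphere' c R θ)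
    continuousOn_const (fun θ _ ↦ hle _ (circleMap_mem_sphere' c R θ))
    ⟨θ, Ioc_subset_Icc_self hθ, hxa⟩

section Subharmonic

variable {u : ℂ → ℝ} {Ω : Set ℂ}

theorem isSubharmonicOn_iff_le_circleAverage :
    IsSubharmonicOn u Ω ↔ ContinuousOn u Ω ∧
      ∀ z r, 0 < r → closedBall z r ⊆ Ω → u z ≤ circleAverage u z r :=
  Iff.rfl

theorem IsSubharmonicOn.mono {V : Set ℂ} (hu : IsSubharmonicOn u Ω) (hV : V ⊆ Ω) :
    IsSubharmonicOn u V :=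
  ⟨hu.1.mono hV, fun z r hr hz ↦ hu.2 z r hr (hz.trans hV)⟩

theorem IsSubharmonicOn.sub_re {g : ℂ → ℂ} (hu : IsSubharmonicOn u Ω)
    (hg : DifferentiableOn ℂ g Ω) : IsSubharmonicOn (fun z ↦ u z - (g z).re) Ω := by
  rw [isSubharmonicOn_iff_le_circleAverage] at hu ⊢
  refine ⟨hu.1.sub (continuous_re.comp_continuousOn hg.continuousOn), fun z r hr hz ↦ ?_⟩
  have hsphere : sphere z |r| ⊆ Ω := by
    rw [abs_of_pos hr]; exact sphere_subset_closedBall.trans hz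
  have hg_int : CircleIntegrable g z r := (hg.continuousOn.mono hsphere).circleIntegrable'
  have hg_mean : circleAverage g z r = g z :=
    (hg.diffContOnCl_ball (by rwa [abs_of_pos hr])).circleAverage
  have hre_mean : circleAverage (fun z ↦ (g z).re) z r = (g z).re := by
    rw [← hg_mean]; exact reCLM.circleAverage_comp_comm hg_int
  rw [circleAverage_fun_sub (f₂ := fun w ↦ (g w).re) (hu.1.mono hsphere).circleIntegrable'
      (continuous_re.comp_continuousOn (hg.continuousOn.mono hsphere)).circleIntegrable', hre_mean]
  exact sub_le_sub_right (hu.2 z r hr hz) _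

theorem IsSubharmonicOn.exists_mem_frontier_isMaxOn {V : Set ℂ} (hu : IsSubharmonicOn u V)
    (huc : ContinuousOn u (closure V)) (hV : IsCompact (closure V)) (hne : V.Nonempty) :
    ∃ x ∈ frontier V, IsMaxOn u (closure V) x := by
  obtain ⟨x₀, hx₀, hmax₀⟩ := hV.exists_isMaxOn (hne.mono subset_closure) huc
  -- Among the maximum points, one with largest real part cannot be an interior point.
  set A := closure V ∩ u ⁻¹' {u x₀}
  have hA : IsCompact A := hV.of_isClosed_subset
    (huc.preimage_isClosed_of_isClosed isClosed_closure isClosed_singleton) inter_subset_left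
  obtain ⟨x, ⟨hxV, hx⟩, hxre⟩ := hA.exists_isMaxOn ⟨x₀, hx₀, rfl⟩ continuous_re.continuousOn
  have hmax : IsMaxOn u (closure V) x := fun y hy ↦ (hmax₀ hy).trans_eq hx.symm
  refine ⟨x, ⟨hxV, fun hint ↦ ?_⟩, hmax⟩
  obtain ⟨r, hr, hball⟩ := nhds_basis_closedBall.mem_iff.1 (mem_interior_iff_mem_nhds.1 hint)
  have hsphere : sphere x |r| ⊆ closure V := by
    rw [abs_of_pos hr]; exact sphere_subset_closedBall.trans (hball.trans subset_closure)
  have hxr : x + r ∈ sphere x |r| := by simp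
  have hlt : u (x + r) < u x := by
    refine (hmax (hsphere hxr)).lt_of_ne fun heq ↦ ?_
    have := hxre ⟨hsphere hxr, heq.trans hx⟩
    simp only [mem_ofPred_eq, add_re, ofReal_re] at this
    linarith
  exact (hu.2 x r hr hball).not_gt
    (circleAverage_lt_of_le_of_exists_lt (huc.mono hsphere) (fun y hy ↦ hmax (hsphere hy))
      ⟨x + r, hxr, hlt⟩)

theorem IsSubharmonicOn.le_of_frontier_le_of_le_of_norm_ge (hΩ : IsOpen Ω)
    (hu : IsSubharmonicOn u Ω) (huc : ContinuousOn u (closure Ω)) {M R : ℝ}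
    (hM : ∀ x ∈ frontier Ω, u x ≤ M) (hR : ∀ x ∈ Ω, R ≤ ‖x‖ → u x ≤ M) :
    ∀ z ∈ Ω, u z ≤ M := by
  intro z hz
  set V := Ω ∩ ball 0 (max R (‖z‖ + 1))
  have hV : IsOpen V := hΩ.inter isOpen_ball
  have hVcpt : IsCompact (closure V) :=
    (isCompact_closedBall 0 (max R (‖z‖ + 1))).of_isClosed_subset isClosed_closure
      ((closure_mono inter_subset_right).trans closure_ball_subset_closedBall)
  have hzV : z ∈ V := ⟨hz, by simp⟩
  obtain ⟨x, hxV, hmax⟩ := (hu.mono inter_subset_left).exists_mem_frontier_isMaxOn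
    (huc.mono (closure_mono inter_subset_left)) hVcpt ⟨z, hzV⟩
  refine (hmax (subset_closure hzV)).trans ?_
  rw [hV.frontier_eq] at hxV
  have hxΩ : x ∈ closure Ω := closure_mono inter_subset_left hxV.1
  by_cases hx : x ∈ Ω
  · refine hR x hx ((le_max_left R (‖z‖ + 1)).trans ?_)
    by_contra! hlt
    exact hxV.2 ⟨hx, by simpa using hlt⟩
  · exact hM x (hΩ.frontier_eq ▸ ⟨hxΩ, hx⟩)

theorem ExhaustiveFamily.le_of_frontier_le {K : ℕ → Set ℂ} (hK : ExhaustiveFamily K Ω)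
    (hu : IsSubharmonicOn u Ω) {B : ℝ} (hB : ∀ i, ∀ x ∈ frontier (K i), u x ≤ B) :
    ∀ z ∈ Ω, u z ≤ B := by
  intro z hz
  obtain ⟨i, hi⟩ := mem_iUnion.1 (hK.union_eq ▸ hz)
  obtain ⟨x, hx, hmax⟩ :=
    (hu.mono (subset_closure.trans (hK.closure_subset i))).exists_mem_frontier_isMaxOn
      (hu.1.mono (hK.closure_subset i)) (hK.compact_closure i) ⟨z, hi⟩
  exact (hmax (subset_closure hi)).trans (hB i x hx)

end Subharmonic

theorem exists_rpow_le_mul_rpow_add {ρ b δ : ℝ} (hρ : 0 ≤ ρ) (hρb : ρ < b) (hδ : 0 < δ) :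
    ∃ B, ∀ r : ℝ, 0 ≤ r → r ^ ρ ≤ δ * r ^ b + B := by
  obtain ⟨R, hR⟩ := eventually_atTop.1
    ((tendsto_rpow_atTop (sub_pos.2 hρb)).eventually_ge_atTop δ⁻¹)
  refine ⟨max R 1 ^ ρ, fun r hr ↦ ?_⟩
  rcases le_total r (max R 1) with hle | hge
  · have : 0 ≤ δ * r ^ b := by positivity
    linarith [Real.rpow_le_rpow hr hle hρ]
  · have hr₀ : 0 < r := one_pos.trans_le ((le_max_right R 1).trans hge)
    have hpow : δ⁻¹ ≤ r ^ (b - ρ) := hR r ((le_max_left R 1).trans hge)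
    calc r ^ ρ = δ * δ⁻¹ * r ^ ρ := by field_simp
      _ ≤ δ * r ^ (b - ρ) * r ^ ρ := by gcongr
      _ = δ * r ^ b := by rw [mul_assoc, ← Real.rpow_add hr₀, sub_add_cancel]
      _ ≤ δ * r ^ b + max R 1 ^ ρ := le_add_of_nonneg_right (by positivity)

theorem IsSubharmonicOn.le_of_exhaustion_of_le_re {U : Set ℂ} (hU : IsOpen U) {u : ℂ → ℝ}
    (hu : IsSubharmonicOn u U) (huc : ContinuousOn u (closure U)) {g : ℂ → ℂ}
    (hg : DifferentiableOn ℂ g U) (hgc : ContinuousOn (fun w ↦ (g w).re) (closure U)) {b c : ℝ}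
    (hc : 0 < c) (hgb : ∀ w ∈ closure U, c * ‖w‖ ^ b ≤ (g w).re) {K : ℕ → Set ℂ}
    (hK : ExhaustiveFamily K U) {C ρ : ℝ} (hC : 0 < C) (hρ : 0 ≤ ρ) (hρb : ρ < b)
    (hKbd : ∀ i, ∀ x ∈ frontier (K i), u x ≤ C * (‖x‖ ^ ρ + 1)) {M : ℝ}
    (hM : ∀ x ∈ frontier U, u x ≤ M) : ∀ z ∈ U, u z ≤ M := by
  have hsub (ε : ℝ) : IsSubharmonicOn (fun w ↦ u w - ε * (g w).re) U := by
    simpa only [re_ofReal_mul] using hu.sub_re (hg.const_mul (ε : ℂ))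
  have hbound (ε : ℝ) (hε : 0 < ε) : ∃ B, ∀ w ∈ U, u w - ε * (g w).re ≤ B := by
    obtain ⟨B, hB⟩ := exists_rpow_le_mul_rpow_add hρ hρb (div_pos (mul_pos hε hc) hC)
    refine ⟨C * (B + 1), hK.le_of_frontier_le (hsub ε) fun i x hx ↦ ?_⟩
    have hgx := hgb x (subset_closure (hK.closure_subset i (frontier_subset_closure hx)))
    have hx_pow := mul_le_mul_of_nonneg_left (hB ‖x‖ (norm_nonneg x)) hC.le
    rw [mul_add, ← mul_assoc, mul_div_cancel₀ _ hC.ne'] at hx_pow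
    nlinarith [hKbd i x hx]
  have hb : 0 < b := hρ.trans_lt hρb
  have hlim (ε : ℝ) (hε : 0 < ε) : ∀ z ∈ U, u z - ε * (g z).re ≤ M := by
    obtain ⟨B, hB⟩ := hbound (ε / 2) (half_pos hε)
    obtain ⟨R, hR⟩ := eventually_atTop.1
      ((tendsto_rpow_atTop hb).eventually_ge_atTop (2 * (B - M) / (ε * c)))
    refine (hsub ε).le_of_frontier_le_of_le_of_norm_ge hU
      (huc.sub (continuousOn_const.mul hgc)) (fun x hx ↦ ?_) (R := R) fun x hx hRx ↦ ?_
    · have hgx := hgb x (frontier_subset_closure hx)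
      have : 0 ≤ c * ‖x‖ ^ b := mul_nonneg hc.le (by positivity)
      nlinarith [hM x hx]
    · have hgx := hgb x (subset_closure hx)
      have hpow := (div_le_iff₀ (mul_pos hε hc)).1 (hR ‖x‖ hRx)
      nlinarith [hB x hx]
  intro z hz
  refine le_of_tendsto (f := fun ε : ℝ ↦ u z - ε * (g z).re) (x := 𝓝[>] 0) ?_
    (eventually_nhdsWithin_of_forall fun ε hε ↦ hlim ε hε z hz)
  exact ((continuous_const.sub (continuous_id.mul continuous_const)).tendsto' 0 (u z)
    (by simp)).mono_left nhdsWithin_le_nhds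

namespace Complex

theorem norm_mul_cos_le_re_iff_abs_arg_le {z : ℂ} {t : ℝ} (ht₀ : 0 ≤ t) (htπ : t ≤ π) :
    ‖z‖ * Real.cos t ≤ z.re ↔ |arg z| ≤ t := by
  rcases eq_or_ne z 0 with rfl | hz
  · simp [ht₀]
  rw [← norm_mul_cos_arg, ← Real.cos_abs (arg z), mul_le_mul_iff_of_pos_left (norm_pos_iff.2 hz)]
  exact strictAntiOn_cos.le_iff_ge ⟨ht₀, htπ⟩ ⟨abs_nonneg _, abs_arg_le_pi z⟩

theorem isClosed_setOf_abs_arg_le {t : ℝ} (ht₀ : 0 ≤ t) (htπ : t ≤ π) :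
    IsClosed {z : ℂ | |arg z| ≤ t} := by
  simp_rw [← norm_mul_cos_le_re_iff_abs_arg_le ht₀ htπ]
  exact isClosed_le (by fun_prop) continuous_re

theorem cos_mul_norm_rpow_le_re_cpow {z : ℂ} {b t : ℝ} (hb : 0 ≤ b) (hbt : b * t ≤ π)
    (hz : |arg z| ≤ t) : Real.cos (b * t) * ‖z‖ ^ b ≤ (z ^ (b : ℂ)).re := by
  rw [cpow_ofReal_re, mul_comm, ← Real.cos_abs (arg z * b), abs_mul, abs_of_nonneg hb]
  gcongr
  refine Real.cos_le_cos_of_nonneg_of_le_pi (by positivity) hbt ?_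
  rw [mul_comm]; gcongr

theorem continuousAt_cpow_const_of_arg_ne_pi {z w : ℂ} (hz : arg z ≠ π) (hw : 0 < w.re) :
    ContinuousAt (fun x ↦ x ^ w) z := by
  refine continuousAt_cpow_const_of_re_pos ?_ hw
  by_contra! h
  exact hz (arg_eq_pi_iff.2 h)

end Complex

section Sector

variable {a R : ℝ}

theorem Da_subset_slitPlane (ha : 1 / 2 ≤ a) (hR : 0 ≤ R) : Da a R ⊆ slitPlane := fun z hz ↦
  mem_slitPlane_iff_arg.2
    ⟨((le_abs_self _).trans_lt (hz.2.trans_le (div_le_self pi_pos.le (by linarith)))).ne,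
      norm_pos_iff.1 (hR.trans_lt hz.1)⟩

theorem isOpen_Da (ha : 1 / 2 ≤ a) (hR : 0 ≤ R) : IsOpen (Da a R) := by
  refine isOpen_iff_mem_nhds.2 fun z hz ↦ inter_mem ?_ ?_
  · exact continuous_norm.continuousAt.preimage_mem_nhds (Ioi_mem_nhds hz.1)
  · exact (continuousAt_arg (Da_subset_slitPlane ha hR hz)).abs.preimage_mem_nhds
      (Iio_mem_nhds hz.2)

theorem closure_Da_subset (ha : 1 / 2 ≤ a) :
    closure (Da a R) ⊆ {z | |arg z| ≤ π / (2 * a)} :=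
  closure_minimal (fun _ hz ↦ hz.2.le)
    (isClosed_setOf_abs_arg_le (by positivity) (div_le_self pi_pos.le (by linarith)))

end Sector

/-- Phragmén–Lindelöf theorem for subharmonic functions on the
sector `D_a(0)`. -/
theorem phragmen_lindelof_subharmonic
    (a : ℝ) (ha : 1 / 2 < a) (f : ℂ → ℝ)
    (hfc : ContinuousOn f (closure (Da a 0)))
    (hfs : IsSubharmonicOn f (Da a 0))
    (C ρ M : ℝ) (hC : 0 < C) (hρ0 : 0 < ρ) (hρa : ρ < a)
    (K : ℕ → Set ℂ) (hK : ExhaustiveFamily K (Da a 0))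
    (hKbd : ∀ i, ∀ z ∈ frontier (K i), f z ≤ C * (‖z‖ ^ ρ + 1))
    (hM : ∀ z ∈ frontier (Da a 0), f z ≤ M) :
    ∀ z ∈ Da a 0, f z ≤ M := by
  obtain ⟨b, hρb, hba⟩ := exists_between hρa
  have hb : 0 < b := hρ0.trans hρb
  have hπa : π / (2 * a) < π := div_lt_self pi_pos (by linarith)
  have hbt : b * (π / (2 * a)) < π / 2 := by
    calc b * (π / (2 * a)) < a * (π / (2 * a)) := by gcongr
      _ = π / 2 := by field_simp
  have harg : ∀ w ∈ closure (Da a 0), |arg w| ≤ π / (2 * a) := closure_Da_subset ha.le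
  have hc : 0 < Real.cos (b * (π / (2 * a))) :=
    cos_pos_of_mem_Ioo ⟨by linarith [mul_pos hb (by positivity : 0 < π / (2 * a))], hbt⟩
  have hcont : ContinuousOn (fun w ↦ (w ^ (b : ℂ)).re) (closure (Da a 0)) := fun w hw ↦
    have harg_ne : arg w ≠ π := ((le_abs_self _).trans_lt ((harg w hw).trans_lt hπa)).ne
    (continuous_re.continuousAt.comp
      (continuousAt_cpow_const_of_arg_ne_pi harg_ne (by simpa using hb))).continuousWithinAt
  exact hfs.le_of_exhaustion_of_le_re (isOpen_Da ha.le le_rfl) hfc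
    (differentiableOn_id.cpow_const fun w hw ↦ Da_subset_slitPlane ha.le le_rfl hw) hcont hc
    (fun w hw ↦ cos_mul_norm_rpow_le_re_cpow hb.le (by linarith [pi_pos]) (harg w hw))
    hK hC hρ0.le hρb hKbd hM
end

section
/- Write ζ=ξ+√−1·η and z=x+√−1·y. For z,ζ∈ℍ the kernel log|(ζ−z̄)/(ζ−z)| is non-negative. There exists a constant C_0>0 such that for every z∈ℍ: 0 ≤ ∫_{−∞}^{∞}dξ ∫_0^{∞} (1+η²)^{−1} · log|(ζ−z̄)/(ζ−z)| dη ≤ C_0·log(1+y). Moreover, for every δ>0 there exists C_δ>0 such that for every z∈ℍ: 0 ≤ ∫_{−∞}^{∞}dξ ∫_0^{∞} (1+η²)^{−1−δ} · log|(ζ−z̄)/(ζ−z)| dη ≤ C_δ·y/(1+y); in particular both double integrals are finite. -/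
open MeasureTheory

/-- The Green-type kernel `log |(ζ - conj z)/(ζ - z)|` with `ζ = ξ + iη`. -/
noncomputable def kernelK (z : ℂ) (p : ℝ × ℝ) : ℝ :=
  Real.log (‖((p.1 : ℂ) + (p.2 : ℂ) * Complex.I - (starRingEnd ℂ) z) /
    ((p.1 : ℂ) + (p.2 : ℂ) * Complex.I - z)‖)

/-!
In coordinates the kernel is `½ log (((ξ - x)² + (η + y)²) / ((ξ - x)² + (η - y)²))`, which is
nonnegative since `(η + y)² ≥ (η - y)²`. For fixed `η ≠ y` its `ξ`-integral is `2π min η y`: this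
follows from the primitive `t log (t² + c²) + 2c arctan (t / c)` of `log (t² + c²) + 2`. By Tonelli
the weighted double integral is therefore `2π ∫₀^∞ w η · min η y dη`.
For `w = (1 + η²)^(-1-δ)` both `A = ∫ w` and `B = ∫ η w` are finite, and the last integral is at
most `min (A y) B ≤ (A + B) y / (1 + y)`.
For `w = (1 + η²)⁻¹` split at `η = y`: the lower part is `log (1 + y²) / 2` and the upper part is
`y arctan (1 / y) ≤ min (π y / 2) 1`; both are `O(log (1 + y))`.
-/

open Real Set Filter Topology

lemma integrable_comp_abs_of_integrableOn_Ioi {f : ℝ → ℝ} (hf : IntegrableOn f (Ioi 0)) :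
    Integrable fun x => f |x| := by
  have hIoi : IntegrableOn (fun x => f |x|) (Ioi 0) :=
    hf.congr_fun (fun x hx => by rw [abs_of_pos hx]) measurableSet_Ioi
  have hIic : IntegrableOn (fun x => f |x|) (Iic 0) := by
    rw [← (Measure.measurePreserving_neg (volume : Measure ℝ)).integrableOn_comp_preimage
      (Homeomorph.neg ℝ).measurableEmbedding]
    simp only [Function.comp_def, abs_neg, neg_preimage, neg_Iic, neg_zero]
    exact (integrableOn_Ici_iff_integrableOn_Ioi (by simp)).2 hIoi
  rw [← integrableOn_univ, ← Iic_union_Ioi (a := (0 : ℝ))]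
  exact hIic.union hIoi

noncomputable def logSqAddSqPrimitive (c t : ℝ) : ℝ :=
  t * log (t ^ 2 + c ^ 2) + 2 * c * arctan (t / c)

lemma hasDerivAt_logSqAddSqPrimitive {c : ℝ} (hc : c ≠ 0) (t : ℝ) :
    HasDerivAt (logSqAddSqPrimitive c) (log (t ^ 2 + c ^ 2) + 2) t := by
  have hpos : 0 < t ^ 2 + c ^ 2 := by positivity
  have hlog : HasDerivAt (fun s => log (s ^ 2 + c ^ 2)) (2 * t / (t ^ 2 + c ^ 2)) t := by
    simpa using ((hasDerivAt_pow 2 t).add_const (c ^ 2)).log hpos.ne'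
  have harctan : HasDerivAt (fun s => arctan (s / c)) (1 / (1 + (t / c) ^ 2) * (1 / c)) t :=
    ((hasDerivAt_id t).div_const c).arctan
  refine (((hasDerivAt_id' t).mul hlog).add (harctan.const_mul (2 * c))).congr_deriv ?_
  field_simp
  ring

lemma tendsto_mul_log_div_sq_add_sq_atTop {a b : ℝ} (hba : b ^ 2 ≤ a ^ 2) :
    Tendsto (fun t => t * log ((t ^ 2 + a ^ 2) / (t ^ 2 + b ^ 2))) atTop (𝓝 0) := by
  refine tendsto_of_tendsto_of_tendsto_of_le_of_le' tendsto_const_nhds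
    (by simpa using tendsto_inv_atTop_zero.const_mul (a ^ 2 - b ^ 2)) ?_ ?_
  · filter_upwards [eventually_gt_atTop 0] with t ht
    refine mul_nonneg ht.le (log_nonneg ?_)
    rw [le_div_iff₀ (by positivity)]
    linarith
  · filter_upwards [eventually_gt_atTop 0] with t ht
    have hB : 0 < t ^ 2 + b ^ 2 := by positivity
    calc t * log ((t ^ 2 + a ^ 2) / (t ^ 2 + b ^ 2))
        ≤ t * ((t ^ 2 + a ^ 2) / (t ^ 2 + b ^ 2) - 1) :=
          mul_le_mul_of_nonneg_left (log_le_sub_one_of_pos (by positivity)) ht.le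
      _ = (a ^ 2 - b ^ 2) * (t / (t ^ 2 + b ^ 2)) := by field_simp; ring
      _ ≤ (a ^ 2 - b ^ 2) * t⁻¹ := by
          refine mul_le_mul_of_nonneg_left ?_ (by linarith)
          rw [div_le_iff₀ hB, inv_mul_eq_div, le_div_iff₀ ht]
          nlinarith

lemma tendsto_logSqAddSqPrimitive_sub {a b : ℝ} (hb : 0 < b) (hba : b ≤ a) :
    Tendsto (fun t => logSqAddSqPrimitive a t - logSqAddSqPrimitive b t) atTop
      (𝓝 (π * (a - b))) := by
  have harctan {c : ℝ} (hc : 0 < c) :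
      Tendsto (fun t => 2 * c * arctan (t / c)) atTop (𝓝 (2 * c * (π / 2))) :=
    ((tendsto_arctan_atTop.mono_right nhdsWithin_le_nhds).comp
      (tendsto_id.atTop_div_const hc)).const_mul (2 * c)
  have hlog := tendsto_mul_log_div_sq_add_sq_atTop (pow_le_pow_left₀ hb.le hba 2)
  convert (hlog.add (harctan (hb.trans_le hba))).sub (harctan hb) using 1
  · ext t
    have hA : 0 < t ^ 2 + a ^ 2 := by nlinarith
    have hB : 0 < t ^ 2 + b ^ 2 := by positivity
    simp only [logSqAddSqPrimitive, log_div hA.ne' hB.ne']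
    ring
  · ring_nf

lemma log_div_sq_add_sq_nonneg {a b : ℝ} (hb : 0 < b) (hba : b ≤ a) (t : ℝ) :
    0 ≤ log ((t ^ 2 + a ^ 2) / (t ^ 2 + b ^ 2)) := by
  refine log_nonneg ?_
  rw [le_div_iff₀ (by positivity)]
  nlinarith

lemma hasDerivAt_logSqAddSqPrimitive_sub {a b : ℝ} (ha : a ≠ 0) (hb : b ≠ 0) (t : ℝ) :
    HasDerivAt (fun t => logSqAddSqPrimitive a t - logSqAddSqPrimitive b t)
      (log ((t ^ 2 + a ^ 2) / (t ^ 2 + b ^ 2))) t := by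
  refine ((hasDerivAt_logSqAddSqPrimitive ha t).sub
    (hasDerivAt_logSqAddSqPrimitive hb t)).congr_deriv ?_
  rw [log_div (by positivity) (by positivity)]
  ring

lemma integrableOn_Ioi_log_div_sq_add_sq {a b : ℝ} (hb : 0 < b) (hba : b ≤ a) :
    IntegrableOn (fun t => log ((t ^ 2 + a ^ 2) / (t ^ 2 + b ^ 2))) (Ioi 0) :=
  integrableOn_Ioi_deriv_of_nonneg'
    (fun t _ => hasDerivAt_logSqAddSqPrimitive_sub (hb.trans_le hba).ne' hb.ne' t)
    (fun t _ => log_div_sq_add_sq_nonneg hb hba t) (tendsto_logSqAddSqPrimitive_sub hb hba)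

lemma integral_Ioi_log_div_sq_add_sq {a b : ℝ} (hb : 0 < b) (hba : b ≤ a) :
    ∫ t in Ioi 0, log ((t ^ 2 + a ^ 2) / (t ^ 2 + b ^ 2)) = π * (a - b) := by
  rw [integral_Ioi_of_hasDerivAt_of_nonneg'
    (fun t _ => hasDerivAt_logSqAddSqPrimitive_sub (hb.trans_le hba).ne' hb.ne' t)
    (fun t _ => log_div_sq_add_sq_nonneg hb hba t) (tendsto_logSqAddSqPrimitive_sub hb hba)]
  simp [logSqAddSqPrimitive]

lemma integrable_log_div_sq_add_sq {a b : ℝ} (hb : 0 < b) (hba : b ≤ a) :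
    Integrable fun t => log ((t ^ 2 + a ^ 2) / (t ^ 2 + b ^ 2)) := by
  simpa only [sq_abs] using integrable_comp_abs_of_integrableOn_Ioi
    (integrableOn_Ioi_log_div_sq_add_sq hb hba)

lemma integral_log_div_sq_add_sq {a b : ℝ} (hb : 0 < b) (hba : b ≤ a) :
    ∫ t, log ((t ^ 2 + a ^ 2) / (t ^ 2 + b ^ 2)) = 2 * π * (a - b) := by
  have := integral_comp_abs (f := fun t => log ((t ^ 2 + a ^ 2) / (t ^ 2 + b ^ 2)))
  simp only [sq_abs] at this
  rw [this, integral_Ioi_log_div_sq_add_sq hb hba]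
  ring

lemma kernelK_eq (z : ℂ) (p : ℝ × ℝ) :
    kernelK z p = log (((p.1 - z.re) ^ 2 + (p.2 + z.im) ^ 2) /
      ((p.1 - z.re) ^ 2 + (p.2 - z.im) ^ 2)) / 2 := by
  have hnum : (p.1 : ℂ) + p.2 * Complex.I - (starRingEnd ℂ) z
      = ((p.1 - z.re : ℝ) : ℂ) + ((p.2 + z.im : ℝ) : ℂ) * Complex.I := by
    apply Complex.ext <;> simp
  have hden : (p.1 : ℂ) + p.2 * Complex.I - z
      = ((p.1 - z.re : ℝ) : ℂ) + ((p.2 - z.im : ℝ) : ℂ) * Complex.I := by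
    apply Complex.ext <;> simp
  rw [kernelK, norm_div, hnum, hden, Complex.norm_add_mul_I, Complex.norm_add_mul_I,
    ← sqrt_div (by positivity), log_sqrt (by positivity)]

lemma kernelK_nonneg {z : ℂ} (hz : 0 < z.im) {p : ℝ × ℝ} (hp : 0 < p.2) :
    0 ≤ kernelK z p := by
  rw [kernelK_eq]
  rcases (by positivity : 0 ≤ (p.1 - z.re) ^ 2 + (p.2 - z.im) ^ 2).eq_or_lt with h | h
  · simp [← h]
  · refine div_nonneg (log_nonneg ?_) zero_le_two
    rw [le_div_iff₀ h]
    nlinarith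

lemma measurable_kernelK (z : ℂ) : Measurable (kernelK z) := by
  unfold kernelK
  fun_prop

lemma kernelK_slice_eq (z : ℂ) (ξ η : ℝ) :
    kernelK z (ξ, η) = log (((ξ - z.re) ^ 2 + (η + z.im) ^ 2) /
      ((ξ - z.re) ^ 2 + |η - z.im| ^ 2)) / 2 := by
  rw [kernelK_eq, sq_abs]

lemma abs_sub_le_add_of_pos {η y : ℝ} (hη : 0 < η) (hy : 0 < y) : |η - y| ≤ η + y :=
  abs_le.2 ⟨by linarith, by linarith⟩

lemma integrable_kernelK_slice {z : ℂ} (hz : 0 < z.im) {η : ℝ} (hη : 0 < η) (hne : η ≠ z.im) :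
    Integrable fun ξ => kernelK z (ξ, η) := by
  simp_rw [kernelK_slice_eq]
  exact ((integrable_log_div_sq_add_sq (abs_pos.2 (sub_ne_zero.2 hne))
    (abs_sub_le_add_of_pos hη hz)).comp_sub_right z.re).div_const 2

lemma integral_kernelK_slice {z : ℂ} (hz : 0 < z.im) {η : ℝ} (hη : 0 < η) (hne : η ≠ z.im) :
    ∫ ξ, kernelK z (ξ, η) = 2 * π * min η z.im := by
  simp_rw [kernelK_slice_eq]
  rw [integral_div, integral_sub_right_eq_self (fun ξ => log ((ξ ^ 2 + (η + z.im) ^ 2) /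
      (ξ ^ 2 + |η - z.im| ^ 2))), integral_log_div_sq_add_sq (abs_pos.2 (sub_ne_zero.2 hne))
      (abs_sub_le_add_of_pos hη hz)]
  rcases le_total η z.im with h | h
  · rw [abs_of_nonpos (by linarith), min_eq_left h]; ring
  · rw [abs_of_nonneg (by linarith), min_eq_right h]; ring

lemma restrict_univ_prod_Ioi_eq_prod :
    (volume : Measure (ℝ × ℝ)).restrict (univ ×ˢ Ioi 0) =
      volume.prod (volume.restrict (Ioi 0)) := by
  rw [Measure.volume_eq_prod, ← Measure.prod_restrict, Measure.restrict_univ]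

section Weighted

variable {z : ℂ} {w : ℝ → ℝ}

lemma ae_integrable_kernelK_slice_and_integral_eq (hz : 0 < z.im) :
    ∀ᵐ η ∂volume.restrict (Ioi 0), Integrable (fun ξ => kernelK z (ξ, η)) ∧
      ∫ ξ, kernelK z (ξ, η) = 2 * π * min η z.im := by
  filter_upwards [ae_restrict_mem measurableSet_Ioi, ae_restrict_of_ae (volume.ae_ne z.im)]
    with η hη hne
  exact ⟨integrable_kernelK_slice hz hη hne, integral_kernelK_slice hz hη hne⟩

lemma integrableOn_weight_mul_kernelK (hz : 0 < z.im) (hw : Measurable w) (hw0 : ∀ η, 0 ≤ w η)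
    (hwmin : IntegrableOn (fun η => w η * min η z.im) (Ioi 0)) :
    IntegrableOn (fun p : ℝ × ℝ => w p.2 * kernelK z p) (univ ×ˢ Ioi 0) := by
  have hmeas : Measurable fun p : ℝ × ℝ => w p.2 * kernelK z p :=
    (hw.comp measurable_snd).mul (measurable_kernelK z)
  rw [IntegrableOn, restrict_univ_prod_Ioi_eq_prod, integrable_prod_iff' hmeas.aestronglyMeasurable]
  constructor
  · filter_upwards [ae_integrable_kernelK_slice_and_integral_eq hz] with η hη
    exact hη.1.const_mul (w η)
  · refine (hwmin.const_mul (2 * π)).congr ?_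
    filter_upwards [ae_integrable_kernelK_slice_and_integral_eq hz,
      ae_restrict_mem measurableSet_Ioi] with η hη hpos
    have hnonneg (ξ : ℝ) : 0 ≤ w η * kernelK z (ξ, η) := mul_nonneg (hw0 η) (kernelK_nonneg hz hpos)
    simp only [Real.norm_of_nonneg (hnonneg _), integral_const_mul, hη.2]
    ring

lemma setIntegral_weight_mul_kernelK (hz : 0 < z.im)
    (hint : IntegrableOn (fun p : ℝ × ℝ => w p.2 * kernelK z p) (univ ×ˢ Ioi 0)) :
    ∫ p in univ ×ˢ Ioi 0, w p.2 * kernelK z p = 2 * π * ∫ η in Ioi 0, w η * min η z.im := by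
  rw [IntegrableOn, restrict_univ_prod_Ioi_eq_prod] at hint
  rw [restrict_univ_prod_Ioi_eq_prod, integral_prod_symm _ hint, ← integral_const_mul]
  refine integral_congr_ae ?_
  filter_upwards [ae_integrable_kernelK_slice_and_integral_eq hz] with η hη
  simp only [integral_const_mul, hη.2]
  ring

end Weighted

lemma le_mul_div_one_add_of_le_of_le {x a b y : ℝ} (hy : 0 ≤ y) (ha : x ≤ a * y) (hb : x ≤ b) :
    x ≤ (a + b) * (y / (1 + y)) := by
  rw [mul_div_assoc', le_div_iff₀ (by positivity)]
  nlinarith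

lemma div_one_add_le_log_one_add {y : ℝ} (hy : 0 ≤ y) : y / (1 + y) ≤ log (1 + y) := by
  calc y / (1 + y) = 1 - (1 + y)⁻¹ := by field_simp; ring
    _ ≤ log (1 + y) := one_sub_inv_le_log_of_pos (by positivity)

lemma integrableOn_Ioi_mul_min {w : ℝ → ℝ} (hw : IntegrableOn w (Ioi 0)) {y : ℝ} (hy : 0 ≤ y) :
    IntegrableOn (fun η => w η * min η y) (Ioi 0) := by
  refine hw.mul_bdd (by fun_prop) (c := y) ?_
  filter_upwards [ae_restrict_mem measurableSet_Ioi] with η hη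
  rw [Real.norm_of_nonneg (le_min (le_of_lt hη) hy)]
  exact min_le_right η y

lemma setIntegral_mul_min_le {w : ℝ → ℝ} (hw0 : ∀ η, 0 ≤ w η) (hw : IntegrableOn w (Ioi 0))
    (hηw : IntegrableOn (fun η => η * w η) (Ioi 0)) {y : ℝ} (hy : 0 ≤ y) :
    ∫ η in Ioi 0, w η * min η y ≤
      ((∫ η in Ioi 0, w η) + ∫ η in Ioi 0, η * w η) * (y / (1 + y)) := by
  refine le_mul_div_one_add_of_le_of_le hy ?_ ?_
  · rw [← integral_mul_const]
    exact setIntegral_mono_on (integrableOn_Ioi_mul_min hw hy) (hw.mul_const y) measurableSet_Ioi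
      fun η _ => mul_le_mul_of_nonneg_left (min_le_right η y) (hw0 η)
  · exact setIntegral_mono_on (integrableOn_Ioi_mul_min hw hy) hηw measurableSet_Ioi
      fun η _ => by rw [mul_comm η]; exact mul_le_mul_of_nonneg_left (min_le_left η y) (hw0 η)

lemma arctan_le_self {x : ℝ} (hx : 0 ≤ x) : arctan x ≤ x := by
  simpa using le_tan (arctan_nonneg.2 hx) (arctan_lt_pi_div_two x)

lemma intervalIntegral_mul_inv_one_add_sq (y : ℝ) :
    ∫ η in (0 : ℝ)..y, (1 + η ^ 2)⁻¹ * η = log (1 + y ^ 2) / 2 := by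
  have hderiv (η : ℝ) : HasDerivAt (fun t => log (1 + t ^ 2) / 2) ((1 + η ^ 2)⁻¹ * η) η := by
    have := (((hasDerivAt_pow 2 η).const_add 1).log (by positivity)).div_const 2
    refine this.congr_deriv ?_
    field_simp
    simp
    ring
  rw [intervalIntegral.integral_eq_sub_of_hasDerivAt (fun η _ => hderiv η)
    (by apply Continuous.intervalIntegrable; fun_prop (disch := intro; positivity))]
  simp

lemma setIntegral_inv_one_add_sq_mul_min_le {y : ℝ} (hy : 0 < y) :
    ∫ η in Ioi 0, (1 + η ^ 2)⁻¹ * min η y ≤ (2 + π / 2) * log (1 + y) := by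
  have hint := integrableOn_Ioi_mul_min integrable_inv_one_add_sq.integrableOn hy.le
  have hsmall : ∫ η in Ioc 0 y, (1 + η ^ 2)⁻¹ * min η y ≤ log (1 + y) := by
    rw [setIntegral_congr_fun measurableSet_Ioc (fun η hη => by rw [min_eq_left hη.2]),
      ← intervalIntegral.integral_of_le hy.le, intervalIntegral_mul_inv_one_add_sq,
      div_le_iff₀ two_pos, mul_comm]
    calc log (1 + y ^ 2) ≤ log ((1 + y) ^ 2) := log_le_log (by positivity) (by nlinarith)
      _ = 2 * log (1 + y) := by rw [log_pow]; norm_num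
  have hlarge : ∫ η in Ioi y, (1 + η ^ 2)⁻¹ * min η y ≤ (π / 2 + 1) * log (1 + y) := by
    rw [setIntegral_congr_fun measurableSet_Ioi (fun η hη => by rw [min_eq_right (le_of_lt hη)]),
      integral_mul_const, integral_Ioi_inv_one_add_sq, ← arctan_inv_of_pos hy]
    refine (le_mul_div_one_add_of_le_of_le hy.le ?_ ?_).trans
      (mul_le_mul_of_nonneg_left (div_one_add_le_log_one_add hy.le) (by positivity))
    · exact mul_le_mul_of_nonneg_right (arctan_lt_pi_div_two _).le hy.le
    · calc arctan y⁻¹ * y ≤ y⁻¹ * y :=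
            mul_le_mul_of_nonneg_right (arctan_le_self (by positivity)) hy.le
        _ = 1 := inv_mul_cancel₀ hy.ne'
  rw [← Ioc_union_Ioi_eq_Ioi hy.le, setIntegral_union (Ioc_disjoint_Ioi le_rfl) measurableSet_Ioi
    (hint.mono_set Ioc_subset_Ioi_self) (hint.mono_set (Ioi_subset_Ioi hy.le))]
  linarith

lemma integrable_one_add_sq_rpow {r : ℝ} (hr : r < -1 / 2) :
    Integrable fun η : ℝ => (1 + η ^ 2) ^ r := by
  have := integrable_rpow_neg_one_add_norm_sq (E := ℝ) (μ := volume) (r := -2 * r)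
    (by simp; linarith)
  simpa [Real.norm_eq_abs, sq_abs, mul_div_assoc] using this

lemma hasDerivAt_one_add_sq_rpow_div {r : ℝ} (hr : r ≠ -1) (η : ℝ) :
    HasDerivAt (fun t => (1 + t ^ 2) ^ (r + 1) / (2 * (r + 1))) (η * (1 + η ^ 2) ^ r) η := by
  have hr' : r + 1 ≠ 0 := fun h => hr (by linarith)
  have := (((hasDerivAt_pow 2 η).const_add 1).rpow_const (p := r + 1)
    (Or.inl (by positivity))).div_const (2 * (r + 1))
  refine this.congr_deriv ?_
  simp only [add_sub_cancel_right]
  field_simp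
  ring

lemma tendsto_one_add_sq_rpow_div {r : ℝ} (hr : r < -1) :
    Tendsto (fun t => (1 + t ^ 2) ^ (r + 1) / (2 * (r + 1))) atTop (𝓝 0) := by
  have h := (tendsto_rpow_neg_atTop (y := -(r + 1)) (by linarith)).comp
    (tendsto_atTop_add_const_left _ 1 (tendsto_pow_atTop two_ne_zero))
  simpa using h.div_const (2 * (r + 1))

lemma integrableOn_Ioi_mul_one_add_sq_rpow {r : ℝ} (hr : r < -1) :
    IntegrableOn (fun η : ℝ => η * (1 + η ^ 2) ^ r) (Ioi 0) :=
  integrableOn_Ioi_deriv_of_nonneg' (fun η _ => hasDerivAt_one_add_sq_rpow_div hr.ne η)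
    (fun η hη => mul_nonneg (le_of_lt hη) (by positivity)) (tendsto_one_add_sq_rpow_div hr)

lemma integral_Ioi_mul_one_add_sq_rpow {r : ℝ} (hr : r < -1) :
    ∫ η in Ioi (0 : ℝ), η * (1 + η ^ 2) ^ r = -1 / (2 * (r + 1)) := by
  rw [integral_Ioi_of_hasDerivAt_of_nonneg' (fun η _ => hasDerivAt_one_add_sq_rpow_div hr.ne η)
    (fun η hη => mul_nonneg (le_of_lt hη) (by positivity)) (tendsto_one_add_sq_rpow_div hr)]
  simp [neg_div]

lemma weighted_kernelK_estimates {w : ℝ → ℝ} (hw : Measurable w) (hw0 : ∀ η, 0 ≤ w η)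
    (hwi : IntegrableOn w (Ioi 0)) {z : ℂ} (hz : 0 < z.im) {B : ℝ}
    (hB : ∫ η in Ioi 0, w η * min η z.im ≤ B) :
    IntegrableOn (fun p : ℝ × ℝ => w p.2 * kernelK z p) (univ ×ˢ Ioi 0) ∧
      0 ≤ ∫ p in univ ×ˢ Ioi 0, w p.2 * kernelK z p ∧
      ∫ p in univ ×ˢ Ioi 0, w p.2 * kernelK z p ≤ 2 * π * B := by
  have hint := integrableOn_weight_mul_kernelK hz hw hw0 (integrableOn_Ioi_mul_min hwi hz.le)
  rw [setIntegral_weight_mul_kernelK hz hint]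
  refine ⟨hint, mul_nonneg (by positivity) ?_, mul_le_mul_of_nonneg_left hB (by positivity)⟩
  exact setIntegral_nonneg measurableSet_Ioi fun η hη =>
    mul_nonneg (hw0 η) (le_min (le_of_lt hη) hz.le)

/-- estimates for integrals of the Green kernel against weights
`(1+η²)⁻¹` and `(1+η²)^{-1-δ}` over the upper half plane. -/
theorem green_kernel_integral_estimates :
    (∀ z : ℂ, 0 < z.im → ∀ p : ℝ × ℝ, 0 < p.2 → 0 ≤ kernelK z p) ∧
    (∃ C₀ : ℝ, 0 < C₀ ∧ ∀ z : ℂ, 0 < z.im →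
      IntegrableOn (fun p : ℝ × ℝ => (1 + p.2 ^ 2)⁻¹ * kernelK z p)
        (Set.univ ×ˢ Set.Ioi 0) volume ∧
      0 ≤ (∫ p in Set.univ ×ˢ Set.Ioi (0 : ℝ), (1 + p.2 ^ 2)⁻¹ * kernelK z p) ∧
      (∫ p in Set.univ ×ˢ Set.Ioi (0 : ℝ), (1 + p.2 ^ 2)⁻¹ * kernelK z p) ≤
        C₀ * Real.log (1 + z.im)) ∧
    (∀ δ : ℝ, 0 < δ → ∃ Cδ : ℝ, 0 < Cδ ∧ ∀ z : ℂ, 0 < z.im →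
      IntegrableOn (fun p : ℝ × ℝ => (1 + p.2 ^ 2) ^ (-1 - δ) * kernelK z p)
        (Set.univ ×ˢ Set.Ioi 0) volume ∧
      0 ≤ (∫ p in Set.univ ×ˢ Set.Ioi (0 : ℝ), (1 + p.2 ^ 2) ^ (-1 - δ) * kernelK z p) ∧
      (∫ p in Set.univ ×ˢ Set.Ioi (0 : ℝ), (1 + p.2 ^ 2) ^ (-1 - δ) * kernelK z p) ≤
        Cδ * (z.im / (1 + z.im))) := by
  refine ⟨fun z hz p hp => kernelK_nonneg hz hp,
    ⟨2 * π * (2 + π / 2), by positivity, fun z hz => ?_⟩, fun δ hδ => ?_⟩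
  · rw [mul_assoc]
    exact weighted_kernelK_estimates (by fun_prop) (fun η => by positivity)
      integrable_inv_one_add_sq.integrableOn hz (setIntegral_inv_one_add_sq_mul_min_le hz)
  · have hr : -1 - δ < -1 := by linarith
    have hw : IntegrableOn (fun η : ℝ => (1 + η ^ 2) ^ (-1 - δ)) (Ioi 0) :=
      (integrable_one_add_sq_rpow (by linarith)).integrableOn
    have hmoment : ∫ η in Ioi (0 : ℝ), η * (1 + η ^ 2) ^ (-1 - δ) = 1 / (2 * δ) := by
      rw [integral_Ioi_mul_one_add_sq_rpow hr, show -1 - δ + 1 = -δ by ring]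
      field_simp
    set A := ∫ η in Ioi (0 : ℝ), (1 + η ^ 2) ^ (-1 - δ)
    have hA : 0 ≤ A := setIntegral_nonneg measurableSet_Ioi fun η _ => by positivity
    refine ⟨2 * π * (A + 1 / (2 * δ)), by positivity, fun z hz => ?_⟩
    have hbound := setIntegral_mul_min_le (fun η => by positivity) hw
      (integrableOn_Ioi_mul_one_add_sq_rpow hr) hz.le
    rw [hmoment] at hbound
    rw [mul_assoc]
    exact weighted_kernelK_estimates (by fun_prop) (fun η => by positivity) hw hz hbound
end

section
/- Let n be a positive integer such that m_{F_∞}(ζ) ≤ n for every zero ζ of F_∞ in Ȳ_1. Let δ_0>0 satisfy {ζ∈ℂ: dist(ζ,Ȳ_1)≤2δ_0}⊆Y, and for 0<δ<δ_0 set W_i(δ)={ζ∈Y_1: dist(ζ,Z(F_i))≥δ}. Then there exist C>0 and i_0 such that for every i≥i_0 and every 0<δ<δ_0, one has |F_i(ζ)| ≥ C·δ^n for all ζ∈W_i(δ). -/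
/-- `G` has a zero of order exactly `m` at `ζ`. -/
def zeroOrder (G : ℂ → ℂ) (ζ : ℂ) (m : ℕ) : Prop :=
  ∃ g : ℂ → ℂ, AnalyticAt ℂ g ζ ∧ g ζ ≠ 0 ∧ ∀ᶠ w in nhds ζ, G w = (w - ζ) ^ m * g w

/-!
Near a point `a` where `Flim` has a zero of order `m`, one proves `c * δ ^ m ≤ ‖F i ζ‖` by
induction on `m`. If `m > 0`, the minimum modulus principle (Hurwitz's argument) yields zeros
`z i → a` of `F i`; by the maximum modulus principle the quotients `dslope (F i) (z i)` converge
uniformly near `a` to `dslope Flim a`, which has a zero of order `m - 1`, and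
`F i ζ = (ζ - z i) * dslope (F i) (z i) ζ` with `δ ≤ ‖ζ - z i‖` supplies the missing factor `δ`.
Compactness of `closure Y₁` makes the constants uniform, and `δ ^ n ≤ max 1 δ₀ ^ n * δ ^ m`
for `δ ≤ δ₀` brings every exponent up to `n`.
-/

open Metric Filter Set Topology

theorem le_norm_of_forall_mem_frontier_le_norm {E : Type*} [NormedAddCommGroup E]
    [NormedSpace ℂ E] [Nontrivial E] {f : E → ℂ} {U : Set E} (hU : Bornology.IsBounded U)
    (hf : DiffContOnCl ℂ f U) (hne : ∀ z ∈ closure U, f z ≠ 0) {ε : ℝ}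
    (hε : ∀ z ∈ frontier U, ε ≤ ‖f z‖) {z : E} (hz : z ∈ closure U) : ε ≤ ‖f z‖ := by
  rcases le_or_gt ε 0 with hε0 | hε0
  · exact hε0.trans (norm_nonneg _)
  have hinv : ‖(f z)⁻¹‖ ≤ ε⁻¹ :=
    Complex.norm_le_of_forall_mem_frontier_norm_le hU (hf.inv hne)
      (fun w hw => by rw [Pi.inv_apply, norm_inv]; exact inv_anti₀ hε0 (hε w hw)) hz
  rw [norm_inv] at hinv
  exact (inv_le_inv₀ (norm_pos_iff.2 (hne z hz)) hε0).1 hinv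

theorem TendstoUniformlyOn.exists_pos_eventually_le_norm {ι X E : Type*} [TopologicalSpace X]
    [NormedAddCommGroup E] {l : Filter ι} {F : ι → X → E} {f : X → E} {K : Set X}
    (hconv : TendstoUniformlyOn F f l K) (hK : IsCompact K) (hf : ContinuousOn f K)
    (hne : ∀ z ∈ K, f z ≠ 0) : ∃ ε > 0, ∀ᶠ i in l, ∀ z ∈ K, ε ≤ ‖F i z‖ := by
  obtain ⟨ε, hε, hεf⟩ := hK.exists_forall_le' hf.norm fun z hz => norm_pos_iff.2 (hne z hz)
  refine ⟨ε / 2, half_pos hε, ?_⟩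
  filter_upwards [Metric.tendstoUniformlyOn_iff.1 hconv (ε / 2) (half_pos hε)] with i hi z hz
  have hclose := hi z hz
  rw [dist_eq_norm] at hclose
  linarith [hεf z hz, norm_sub_norm_le (f z) (F i z)]

theorem IsCompact.exists_pos_eventually_forall {X ι : Type*} [TopologicalSpace X]
    {l : Filter ι} {K : Set X} (hK : IsCompact K) {P : ℝ → ι → X → Prop}
    (hP : ∀ ⦃c c' i x⦄, c' ≤ c → P c i x → P c' i x)
    (hloc : ∀ a ∈ K, ∃ c > 0, ∃ U ∈ 𝓝 a, ∀ᶠ i in l, ∀ x ∈ U, P c i x) :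
    ∃ c > 0, ∀ᶠ i in l, ∀ x ∈ K, P c i x := by
  refine hK.induction_on (p := fun s => ∃ c > 0, ∀ᶠ i in l, ∀ x ∈ s, P c i x)
    ⟨1, one_pos, by simp⟩ ?_ ?_ ?_
  · rintro s t hst ⟨c, hc, ht⟩
    exact ⟨c, hc, ht.mono fun i hi x hx => hi x (hst hx)⟩
  · rintro s t ⟨c, hc, hs⟩ ⟨c', hc', ht⟩
    refine ⟨min c c', lt_min hc hc', ?_⟩
    filter_upwards [hs, ht] with i hsi hti x hx
    rcases hx with hx | hx
    exacts [hP (min_le_left _ _) (hsi x hx), hP (min_le_right _ _) (hti x hx)]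
  · intro a ha
    obtain ⟨c, hc, U, hU, hcU⟩ := hloc a ha
    exact ⟨U, mem_nhdsWithin_of_mem_nhds hU, c, hc, hcU⟩

section Dslope

variable {𝕜 : Type*} [NontriviallyNormedField 𝕜] {f : 𝕜 → 𝕜} {a : 𝕜}

theorem apply_eq_sub_mul_dslope (ha : f a = 0) (w : 𝕜) : f w = (w - a) * dslope f a w := by
  simpa [ha] using (sub_smul_dslope f a w).symm

theorem AnalyticAt.analyticOrderAt_eq_analyticOrderAt_dslope_add_one (hf : AnalyticAt 𝕜 f a)
    (ha : f a = 0) : analyticOrderAt f a = analyticOrderAt (dslope f a) a + 1 := by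
  obtain ⟨p, hp⟩ := hf
  have hfactor : f = (· - a) * dslope f a := funext (apply_eq_sub_mul_dslope ha)
  calc analyticOrderAt f a = analyticOrderAt ((· - a) * dslope f a) a :=
        congrArg (analyticOrderAt · a) hfactor
    _ = analyticOrderAt (dslope f a) a + 1 := by
        rw [analyticOrderAt_mul (by fun_prop) hp.has_fpower_series_dslope_fslope.analyticAt,
          analyticOrderAt_id_sub_const_self, add_comm]

theorem norm_sub_mul_norm_dslope_sub_dslope_le (F : 𝕜 → 𝕜) (c w : 𝕜) :
    ‖w - c‖ * ‖dslope F c w - dslope f a w‖ ≤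
      ‖F w - f w‖ + ‖F c - f a‖ + ‖c - a‖ * ‖dslope f a w‖ := by
  have hF := sub_smul_dslope F c w
  have hf := sub_smul_dslope f a w
  rw [smul_eq_mul] at hF hf
  have hid : (w - c) * (dslope F c w - dslope f a w) =
      (F w - f w) - (F c - f a) + (c - a) * dslope f a w := by
    linear_combination hF - hf
  rw [← norm_mul, hid, ← norm_mul]
  linarith [norm_add_le (F w - f w - (F c - f a)) ((c - a) * dslope f a w),
    norm_sub_le (F w - f w) (F c - f a)]

end Dslope

theorem DifferentiableOn.dslope_closedBall {f : ℂ → ℂ} {a c : ℂ} {R : ℝ}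
    (hf : DifferentiableOn ℂ f (closedBall a R)) (hc : c ∈ ball a R) :
    DifferentiableOn ℂ (dslope f c) (closedBall a R) :=
  (Complex.differentiableOn_dslope
    (mem_of_superset (isOpen_ball.mem_nhds hc) ball_subset_closedBall)).2 hf

section UniformLimit

variable {ι : Type*} {l : Filter ι} {F : ι → ℂ → ℂ} {f : ℂ → ℂ} {a : ℂ} {R : ℝ}

theorem TendstoUniformlyOn.eventually_exists_zero
    (hconv : TendstoUniformlyOn F f l (closedBall a R))
    (hR : 0 < R) (hF : ∀ᶠ i in l, DifferentiableOn ℂ (F i) (closedBall a R))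
    (hf : ContinuousOn f (sphere a R)) (ha : f a = 0) (hne : ∀ z ∈ sphere a R, f z ≠ 0) :
    ∀ᶠ i in l, ∃ z ∈ ball a R, F i z = 0 := by
  obtain ⟨ε, hε, hεF⟩ := (hconv.mono sphere_subset_closedBall).exists_pos_eventually_le_norm
    (isCompact_sphere a R) hf hne
  have hFa : ∀ᶠ i in l, ‖F i a‖ < ε := by
    filter_upwards [Metric.tendstoUniformlyOn_iff.1 hconv ε hε] with i hi
    simpa [ha] using hi a (mem_closedBall_self hR.le)
  filter_upwards [hF, hεF, hFa] with i hFi hsphere hFia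
  by_contra! hball
  have hFi_ne : ∀ z ∈ closure (ball a R), F i z ≠ 0 := by
    rw [closure_ball a hR.ne', ← ball_union_sphere]
    rintro z (hz | hz)
    · exact hball z hz
    · exact norm_pos_iff.1 (hε.trans_le (hsphere z hz))
  refine hFia.not_ge (le_norm_of_forall_mem_frontier_le_norm isBounded_ball
    (hFi.diffContOnCl_ball subset_rfl) hFi_ne ?_ (subset_closure (mem_ball_self hR)))
  rwa [frontier_ball a hR.ne']

theorem TendstoUniformlyOn.exists_tendsto_zero
    (hconv : TendstoUniformlyOn F f l (closedBall a R))
    (hR : 0 < R) (hF : ∀ᶠ i in l, DifferentiableOn ℂ (F i) (closedBall a R))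
    (hf : ContinuousOn f (closedBall a R)) (ha : f a = 0)
    (hne : ∀ z ∈ closedBall a R, z ≠ a → f z ≠ 0) :
    ∃ z : ι → ℂ, Tendsto z l (𝓝 a) ∧ ∀ᶠ i in l, F i (z i) = 0 := by
  set z : ι → ℂ := fun i => Classical.epsilon fun w => w ∈ closedBall a R ∧ F i w = 0
  have hz : ∀ᶠ i in l, z i ∈ closedBall a R ∧ F i (z i) = 0 := by
    filter_upwards [hconv.eventually_exists_zero hR hF (hf.mono sphere_subset_closedBall) ha
      fun w hw => hne w (sphere_subset_closedBall hw) (ne_of_mem_sphere hw hR.ne')]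
      with i hi
    obtain ⟨w, hw, hFw⟩ := hi
    exact Classical.epsilon_spec (p := fun w => w ∈ closedBall a R ∧ F i w = 0)
      ⟨w, ball_subset_closedBall hw, hFw⟩
  refine ⟨z, Metric.tendsto_nhds.2 fun ρ hρ => ?_, hz.mono fun i hi => hi.2⟩
  have hK : closedBall a R \ ball a ρ ⊆ closedBall a R := sdiff_subset
  obtain ⟨ε, hε, hεF⟩ := (hconv.mono hK).exists_pos_eventually_le_norm
    ((isCompact_closedBall a R).diff isOpen_ball) (hf.mono hK)
    fun w hw => hne w hw.1 (by rintro rfl; exact hw.2 (mem_ball_self hρ))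
  filter_upwards [hz, hεF] with i ⟨hzR, hz0⟩ hfar
  by_contra hzρ
  have hF0 := hfar (z i) ⟨hzR, hzρ⟩
  rw [hz0, norm_zero] at hF0
  exact hε.not_ge hF0

theorem tendstoUniformlyOn_closedBall_of_sphere {G : ι → ℂ → ℂ} {g : ℂ → ℂ} {r : ℝ} (hr : 0 < r)
    (hG : ∀ᶠ i in l, DifferentiableOn ℂ (G i) (closedBall a r))
    (hg : DifferentiableOn ℂ g (closedBall a r)) (hconv : TendstoUniformlyOn G g l (sphere a r)) :
    TendstoUniformlyOn G g l (closedBall a r) := by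
  rw [Metric.tendstoUniformlyOn_iff] at hconv ⊢
  intro ε hε
  filter_upwards [hG, hconv (ε / 2) (half_pos hε)] with i hGi hi w hw
  rw [dist_eq_norm]
  refine (Complex.norm_le_of_forall_mem_frontier_norm_le isBounded_ball
    ((hg.sub hGi).diffContOnCl_ball subset_rfl) (C := ε / 2) ?_ ?_).trans_lt (half_lt_self hε)
  · rw [frontier_ball a hr.ne']
    exact fun w hw => (dist_eq_norm (g w) (G i w) ▸ hi w hw).le
  · rwa [closure_ball a hr.ne']

theorem tendstoUniformlyOn_dslope (hconv : TendstoUniformlyOn F f l (closedBall a R))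
    (hR : 0 < R) (hF : ∀ᶠ i in l, DifferentiableOn ℂ (F i) (closedBall a R))
    (hf : DifferentiableOn ℂ f (closedBall a R)) {z : ι → ℂ} (hz : Tendsto z l (𝓝 a)) :
    TendstoUniformlyOn (fun i => dslope (F i) (z i)) (dslope f a) l (closedBall a (R / 2)) := by
  set r := R / 2 with hr_def
  have hr : 0 < r := half_pos hR
  have hrR : closedBall a r ⊆ closedBall a R := closedBall_subset_closedBall (by linarith)
  have hh := hf.dslope_closedBall (mem_ball_self hR)
  have hzr : ∀ᶠ i in l, z i ∈ ball a r := hz.eventually (isOpen_ball.mem_nhds (mem_ball_self hr))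
  refine tendstoUniformlyOn_closedBall_of_sphere hr ?_ (hh.mono hrR) ?_
  · filter_upwards [hF, hzr] with i hFi hzi
    exact (hFi.dslope_closedBall (ball_subset_ball (by linarith) hzi)).mono hrR
  obtain ⟨H, hH⟩ := (isCompact_sphere a r).exists_bound_of_continuousOn
    (hh.continuousOn.mono (sphere_subset_closedBall.trans hrR))
  have hFz : Tendsto (fun i => F i (z i)) l (𝓝 (f a)) :=
    hconv.tendsto_comp (hf.continuousOn a (mem_closedBall_self hR.le))
      (tendsto_nhdsWithin_iff.2 ⟨hz, hz.eventually (closedBall_mem_nhds a hR)⟩)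
  rw [Metric.tendstoUniformlyOn_iff]
  intro ε hε
  set η := ε * r / 12 with hη_def
  have hη : 0 < η := by positivity
  filter_upwards [Metric.tendsto_nhds.1 hz (min (r / 2) (η / (|H| + 1))) (by positivity),
    Metric.tendsto_nhds.1 hFz η hη, Metric.tendstoUniformlyOn_iff.1 hconv η hη]
    with i hzi hFzi hFi_close w hw
  have hwz : r / 2 ≤ ‖w - z i‖ := by
    rw [← dist_eq_norm]
    linarith [dist_triangle w (z i) a, mem_sphere.1 hw, min_le_left (r / 2) (η / (|H| + 1))]
  have hw_close : ‖F i w - f w‖ < η := by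
    rw [← dist_eq_norm, dist_comm]; exact hFi_close w (hrR (sphere_subset_closedBall hw))
  have hza_H : ‖z i - a‖ * ‖dslope f a w‖ ≤ η := by
    rw [← dist_eq_norm]
    calc dist (z i) a * ‖dslope f a w‖ ≤ η / (|H| + 1) * (|H| + 1) := by
          gcongr
          · exact hzi.le.trans (min_le_right _ _)
          · exact (hH w hw).trans ((le_abs_self H).trans (le_add_of_nonneg_right zero_le_one))
      _ = η := div_mul_cancel₀ η (by positivity)
  rw [dist_eq_norm] at hFzi
  have hsum : r / 2 * ‖dslope f a w - dslope (F i) (z i) w‖ ≤ r / 2 * (ε / 2) :=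
    calc r / 2 * ‖dslope f a w - dslope (F i) (z i) w‖
        ≤ ‖w - z i‖ * ‖dslope (F i) (z i) w - dslope f a w‖ := by rw [norm_sub_rev]; gcongr
      _ ≤ 3 * η := (norm_sub_mul_norm_dslope_sub_dslope_le (F i) (z i) w).trans (by linarith)
      _ = r / 2 * (ε / 2) := by rw [hη_def]; ring
  rw [dist_eq_norm]
  exact (le_of_mul_le_mul_left hsum (half_pos hr)).trans_lt (half_lt_self hε)

end UniformLimit

theorem exists_lower_bound_of_analyticOrderAt_eq {ι : Type*} {l : Filter ι} {a : ℂ} (m : ℕ) :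
    ∀ {F : ι → ℂ → ℂ} {f : ℂ → ℂ} {R : ℝ}, TendstoUniformlyOn F f l (closedBall a R) → 0 < R →
      (∀ᶠ i in l, DifferentiableOn ℂ (F i) (closedBall a R)) →
      DifferentiableOn ℂ f (closedBall a R) → (∀ z ∈ closedBall a R, z ≠ a → f z ≠ 0) →
      analyticOrderAt f a = m →
      ∃ c > 0, ∃ r > 0, ∀ᶠ i in l, ∀ δ : ℝ, 0 ≤ δ → ∀ ζ ∈ closedBall a r,
        (∀ w ∈ closedBall a R, F i w = 0 → δ ≤ dist ζ w) → c * δ ^ m ≤ ‖F i ζ‖ := by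
  induction m with
  | zero =>
    intro F f R hconv hR hF hf hne hm
    have hfa : f a ≠ 0 :=
      (hf.analyticAt (closedBall_mem_nhds a hR)).analyticOrderAt_eq_zero.1 (mod_cast hm)
    have hne' : ∀ z ∈ closedBall a R, f z ≠ 0 := fun z hz => by
      rcases eq_or_ne z a with rfl | hza
      exacts [hfa, hne z hz hza]
    obtain ⟨c, hc, hcF⟩ := hconv.exists_pos_eventually_le_norm (isCompact_closedBall a R)
      hf.continuousOn hne'
    exact ⟨c, hc, R, hR, hcF.mono fun i hi δ _ ζ hζ _ => by simpa using hi ζ hζ⟩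
  | succ m ih =>
    intro F f R hconv hR hF hf hne hm
    have hfan : AnalyticAt ℂ f a := hf.analyticAt (closedBall_mem_nhds a hR)
    have hfa : f a = 0 := hfan.analyticOrderAt_ne_zero.1 (by rw [hm]; exact_mod_cast m.succ_ne_zero)
    obtain ⟨z, hz, hFz⟩ := hconv.exists_tendsto_zero hR hF hf.continuousOn hfa hne
    have hzR : ∀ᶠ i in l, z i ∈ ball a R := hz.eventually (isOpen_ball.mem_nhds (mem_ball_self hR))
    have hR2 : closedBall a (R / 2) ⊆ closedBall a R := closedBall_subset_closedBall (by linarith)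
    have hord : analyticOrderAt (dslope f a) a = m := by
      rw [hfan.analyticOrderAt_eq_analyticOrderAt_dslope_add_one hfa] at hm
      push_cast at hm
      exact ENat.add_left_injective_of_ne_top ENat.one_ne_top hm
    obtain ⟨c, hc, r, hr, hbound⟩ := ih (tendstoUniformlyOn_dslope hconv hR hF hf hz)
      (half_pos hR)
      (by filter_upwards [hF, hzR] with i hFi hzi using (hFi.dslope_closedBall hzi).mono hR2)
      ((hf.dslope_closedBall (mem_ball_self hR)).mono hR2)
      (fun w hw hwa hw0 => hne w (hR2 hw) hwa
        (by rw [apply_eq_sub_mul_dslope hfa w, hw0, mul_zero]))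
      hord
    refine ⟨c, hc, r, hr, ?_⟩
    filter_upwards [hbound, hFz, hzR] with i hi hFzi hzi δ hδ ζ hζ hzero
    have hfactor := apply_eq_sub_mul_dslope hFzi
    have hg : c * δ ^ m ≤ ‖dslope (F i) (z i) ζ‖ := hi δ hδ ζ hζ fun w hw hgw =>
      hzero w (hR2 hw) (by rw [hfactor, hgw, mul_zero])
    calc c * δ ^ (m + 1) = δ * (c * δ ^ m) := by ring
      _ ≤ dist ζ (z i) * ‖dslope (F i) (z i) ζ‖ :=
        mul_le_mul (hzero _ (ball_subset_closedBall hzi) hFzi) hg (by positivity) dist_nonneg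
      _ = ‖F i ζ‖ := by rw [hfactor ζ, norm_mul, dist_eq_norm]

theorem exists_lower_bound_near {ι : Type*} {l : Filter ι} {Y : Set ℂ} (hY : IsOpen Y)
    {F : ι → ℂ → ℂ} {f : ℂ → ℂ} (hconv : TendstoLocallyUniformlyOn F f l Y)
    (hF : ∀ i, DifferentiableOn ℂ (F i) Y) (hf : DifferentiableOn ℂ f Y) {a : ℂ} (ha : a ∈ Y)
    (hfa : analyticOrderAt f a ≠ ⊤) :
    ∃ c > 0, ∃ U ∈ 𝓝 a, ∀ᶠ i in l, ∀ δ : ℝ, 0 ≤ δ → ∀ ζ ∈ U,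
      (∀ w ∈ Y, F i w = 0 → δ ≤ dist ζ w) → c * δ ^ analyticOrderNatAt f a ≤ ‖F i ζ‖ := by
  have hisolated : ∀ᶠ z in 𝓝 a, z ∈ Y ∧ (z ≠ a → f z ≠ 0) :=
    Filter.Eventually.and (hY.mem_nhds ha) (eventually_nhdsWithin_iff.1
      ((hf.analyticAt (hY.mem_nhds ha)).eventually_eq_zero_or_eventually_ne_zero.resolve_left
        (by rwa [← analyticOrderAt_eq_top])))
  obtain ⟨R, hR, hRY⟩ := nhds_basis_closedBall.eventually_iff.1 hisolated
  have hRY' : closedBall a R ⊆ Y := fun z hz => (hRY hz).1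
  obtain ⟨c, hc, r, hr, hbound⟩ := exists_lower_bound_of_analyticOrderAt_eq
    (analyticOrderNatAt f a)
    ((tendstoLocallyUniformlyOn_iff_forall_isCompact hY).1 hconv _ hRY' (isCompact_closedBall a R))
    hR (.of_forall fun i => (hF i).mono hRY') (hf.mono hRY') (fun z hz => (hRY hz).2)
    (Nat.cast_analyticOrderNatAt hfa).symm
  exact ⟨c, hc, closedBall a r, closedBall_mem_nhds a hr,
    hbound.mono fun i hi δ hδ ζ hζ hzero => hi δ hδ ζ hζ fun w hw => hzero w (hRY' hw)⟩

theorem zeroOrder_analyticOrderNatAt {f : ℂ → ℂ} {a : ℂ} (hf : AnalyticAt ℂ f a)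
    (hfa : analyticOrderAt f a ≠ ⊤) : zeroOrder f a (analyticOrderNatAt f a) := by
  obtain ⟨g, hg, hga, hfg⟩ := (hf.analyticOrderNatAt_eq_iff hfa).1 rfl
  exact ⟨g, hg, hga, by simpa using hfg⟩

theorem div_max_one_pow_mul_pow_le {c δ D x : ℝ} (hc : 0 ≤ c) (hδ : 0 ≤ δ) (hδD : δ ≤ D)
    {m n : ℕ} (hmn : m ≤ n) (h : c * δ ^ m ≤ x) : c / max 1 D ^ n * δ ^ n ≤ x := by
  have hD : δ ≤ max 1 D := hδD.trans (le_max_right _ _)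
  have hpow : δ ^ n ≤ max 1 D ^ n * δ ^ m :=
    calc δ ^ n = δ ^ (n - m) * δ ^ m := by rw [← pow_add, Nat.sub_add_cancel hmn]
      _ ≤ max 1 D ^ (n - m) * δ ^ m := by gcongr
      _ ≤ max 1 D ^ n * δ ^ m := by gcongr; exacts [le_max_left _ _, Nat.sub_le _ _]
  calc c / max 1 D ^ n * δ ^ n ≤ c / max 1 D ^ n * (max 1 D ^ n * δ ^ m) := by gcongr
    _ = c * δ ^ m := by field_simp
    _ ≤ x := h

theorem lower_bound_away_from_zeros_general
    (Y Y₁ : Set ℂ) (hY : IsOpen Y) (hYconn : IsConnected Y)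
    (hY₁c : IsCompact (closure Y₁)) (hY₁Y : closure Y₁ ⊆ Y)
    (F : ℕ → ℂ → ℂ) (hF : ∀ i, DifferentiableOn ℂ (F i) Y)
    (Flim : ℂ → ℂ) (hFlim : DifferentiableOn ℂ Flim Y)
    (hconv : TendstoLocallyUniformlyOn F Flim Filter.atTop Y)
    (hne : ∃ z ∈ Y, Flim z ≠ 0)
    (n : ℕ)
    (hord : ∀ ζ ∈ closure Y₁, ∀ m : ℕ, zeroOrder Flim ζ m → m ≤ n)
    (δ₀ : ℝ) :
    ∃ C : ℝ, 0 < C ∧ ∃ i₀ : ℕ, ∀ i ≥ i₀, ∀ δ : ℝ, 0 < δ → δ < δ₀ →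
      ∀ ζ ∈ Y₁, (∀ w ∈ Y, F i w = 0 → δ ≤ dist ζ w) →
        C * δ ^ n ≤ ‖F i ζ‖ := by
  have hFlim_an : AnalyticOnNhd ℂ Flim Y := hFlim.analyticOnNhd hY
  obtain ⟨z, hzY, hz⟩ := hne
  have hfin : ∀ a ∈ Y, analyticOrderAt Flim a ≠ ⊤ := fun a ha =>
    hFlim_an.analyticOrderAt_ne_top_of_isPreconnected hYconn.isPreconnected hzY ha
      (by simp [(hFlim_an z hzY).analyticOrderAt_eq_zero.2 hz])
  have hloc : ∀ a ∈ closure Y₁, ∃ C > 0, ∃ U ∈ 𝓝 a, ∀ᶠ i in atTop, ∀ ζ ∈ U, ∀ δ : ℝ, 0 < δ →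
      δ < δ₀ → (∀ w ∈ Y, F i w = 0 → δ ≤ dist ζ w) → C * δ ^ n ≤ ‖F i ζ‖ := by
    intro a ha
    have hmn := hord a ha _ (zeroOrder_analyticOrderNatAt (hFlim_an a (hY₁Y ha)) (hfin a (hY₁Y ha)))
    obtain ⟨c, hc, U, hU, hbound⟩ :=
      exists_lower_bound_near hY hconv hF hFlim (hY₁Y ha) (hfin a (hY₁Y ha))
    exact ⟨c / max 1 δ₀ ^ n, by positivity, U, hU, hbound.mono fun i hi ζ hζ δ hδ hδδ₀ hzero =>
      div_max_one_pow_mul_pow_le hc.le hδ.le hδδ₀.le hmn (hi δ hδ.le ζ hζ hzero)⟩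
  obtain ⟨C, hC, hev⟩ := hY₁c.exists_pos_eventually_forall
    (fun C C' i ζ hCC' hC δ hδ hδδ₀ hzero =>
      (by gcongr : C' * δ ^ n ≤ C * δ ^ n).trans (hC δ hδ hδδ₀ hzero)) hloc
  obtain ⟨i₀, hi₀⟩ := eventually_atTop.1 hev
  exact ⟨C, hC, i₀, fun i hi δ hδ hδδ₀ ζ hζ hzero => hi₀ i hi ζ (subset_closure hζ) δ hδ hδδ₀ hzero⟩

/-- a uniform lower bound for `|F_i|` away from the zero set. -/
theorem lower_bound_away_from_zeros
    (Y Y₁ : Set ℂ) (hY : IsOpen Y) (hYconn : IsConnected Y)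
    (hY₁ : IsOpen Y₁) (hY₁c : IsCompact (closure Y₁)) (hY₁Y : closure Y₁ ⊆ Y)
    (F : ℕ → ℂ → ℂ) (hF : ∀ i, DifferentiableOn ℂ (F i) Y)
    (Flim : ℂ → ℂ) (hFlim : DifferentiableOn ℂ Flim Y)
    (hconv : TendstoLocallyUniformlyOn F Flim Filter.atTop Y)
    (hne : ∃ z ∈ Y, Flim z ≠ 0)
    (n : ℕ) (hn : 0 < n)
    (hord : ∀ ζ ∈ closure Y₁, ∀ m : ℕ, zeroOrder Flim ζ m → m ≤ n)
    (δ₀ : ℝ) (hδ₀ : 0 < δ₀)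
    (hthick : ∀ ζ : ℂ, ∀ w ∈ closure Y₁, dist ζ w ≤ 2 * δ₀ → ζ ∈ Y) :
    ∃ C : ℝ, 0 < C ∧ ∃ i₀ : ℕ, ∀ i ≥ i₀, ∀ δ : ℝ, 0 < δ → δ < δ₀ →
      ∀ ζ ∈ Y₁, (∀ w ∈ Y, F i w = 0 → δ ≤ dist ζ w) →
        C * δ ^ n ≤ ‖F i ζ‖ :=
  lower_bound_away_from_zeros_general Y Y₁ hY hYconn hY₁c hY₁Y F hF Flim hFlim hconv hne n hord δ₀
end
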